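/- arXiv:2502.16637 — 2 statements merged into one kernel-verified Lean document; each statement's English description precedes it below -/
import Mathlib

section
/- Let n ≥ 1. For k = 1,…,n let p_k : ℝ × ℝⁿ → (0,∞) be three-times continuously differentiable (conditional marginal densities p_k(y_k | x)), for i = 1,…,n let p̂_i : ℝ × ℝⁿ → (0,∞) be three-times continuously differentiable, and let h : ℝⁿ → ℝⁿ be three-times continuously differentiable with Jacobian matrix H(ŷ) invertible at every ŷ, such that for all ŷ, x ∈ ℝⁿ: ∏_{i=1}^n p̂_i(ŷ_i, x) = (∏_{k=1}^n p_k(h(ŷ)_k, x)) · |det H(ŷ)|. Then for all i ≠ j, all l ∈ {1,…,n}, and all ŷ, x ∈ ℝⁿ: ∑_{k=1}^n [ (∂³ log p_k / ∂y_k² ∂x_l)(h(ŷ)_k, x) · H_{ki}(ŷ) · H_{kj}(ŷ) + (∂² log p_k / ∂y_k ∂x_l)(h(ŷ)_k, x) · ∂H_{ki}/∂ŷ_j (ŷ) ] = 0. -/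
/-
Write `q_k(s) = ∂_{x_l} log p_k(s, x)`. Taking logarithms in the change-of-variables formula and
differentiating in `x_l` kills the Jacobian factor, which does not depend on `x`, and leaves
`∑ₖ q_k(h(ŷ)_k) = ∑ᵢ q̂_i(ŷ_i)`. The right-hand side is a sum of functions of one coordinate
each, so its mixed partial `∂²/∂ŷ_i ∂ŷ_j` vanishes for `i ≠ j`; computing the same mixed partial
of the left-hand side by the chain and product rules gives the claimed sum.
-/

/-- Partial derivative of `f : ℝⁿ → ℝ` with respect to the `i`-th coordinate at `x`. -/
noncomputable def pd {k : ℕ} (i : Fin k) (f : (Fin k → ℝ) → ℝ) (x : Fin k → ℝ) : ℝ :=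
  deriv (fun t => f (Function.update x i t)) (x i)

/-- Jacobian matrix of `h : ℝⁿ → ℝⁿ` at `yh`, with `(k, i)` entry `∂ h_k / ∂ y_i`. -/
noncomputable def jac {n : ℕ} (h : (Fin n → ℝ) → (Fin n → ℝ)) (yh : Fin n → ℝ) :
    Matrix (Fin n) (Fin n) ℝ :=
  Matrix.of fun k i => pd i (fun z => h z k) yh

/-- `vvec p k y x` has `l`-th entry `∂² log p_k(y_k, x) / ∂y_k ∂x_l`. -/
noncomputable def vvec {n : ℕ} (p : Fin n → ℝ × (Fin n → ℝ) → ℝ) (k : Fin n)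
    (y x : Fin n → ℝ) : Fin n → ℝ := fun l =>
  deriv (fun s => deriv (fun t => Real.log (p k (s, Function.update x l t))) (x l)) (y k)

/-- `vrvec p k y x` has `l`-th entry `∂³ log p_k(y_k, x) / ∂y_k² ∂x_l`. -/
noncomputable def vrvec {n : ℕ} (p : Fin n → ℝ × (Fin n → ℝ) → ℝ) (k : Fin n)
    (y x : Fin n → ℝ) : Fin n → ℝ := fun l =>
  deriv (deriv (fun s => deriv (fun t => Real.log (p k (s, Function.update x l t))) (x l))) (y k)

open Function

section Update

variable {𝕜 ι F : Type*} [NontriviallyNormedField 𝕜] [Fintype ι] [DecidableEq ι]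
  [NormedAddCommGroup F] [NormedSpace 𝕜 F]

theorem HasFDerivAt.hasDerivAt_comp_update {f : (ι → 𝕜) → F} {f' : (ι → 𝕜) →L[𝕜] F}
    {x : ι → 𝕜} (hf : HasFDerivAt f f' x) (i : ι) :
    HasDerivAt (fun t => f (update x i t)) (f' (Pi.single i 1)) (x i) :=
  hf.comp_hasDerivAt_of_eq (x i) (hasDerivAt_update x i (x i)) (update_eq_self i x).symm

theorem HasFDerivAt.hasDerivAt_comp_prodMk_update {f : 𝕜 × (ι → 𝕜) → F}
    {f' : 𝕜 × (ι → 𝕜) →L[𝕜] F} {s : 𝕜} {x : ι → 𝕜} (hf : HasFDerivAt f f' (s, x)) (i : ι) :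
    HasDerivAt (fun t => f (s, update x i t)) (f' (0, Pi.single i 1)) (x i) :=
  hf.comp_hasDerivAt_of_eq (x i) ((hasDerivAt_const _ s).prodMk (hasDerivAt_update x i (x i)))
    (by rw [update_eq_self])

end Update

section PartialDerivative

variable {n : ℕ} {f g : (Fin n → ℝ) → ℝ} {x : Fin n → ℝ} {i : Fin n}

theorem hasDerivAt_pd (hf : DifferentiableAt ℝ f x) :
    HasDerivAt (fun t => f (update x i t)) (pd i f x) (x i) :=
  (hf.hasFDerivAt.hasDerivAt_comp_update i).differentiableAt.hasDerivAt

theorem pd_eq_fderiv (hf : DifferentiableAt ℝ f x) : pd i f x = fderiv ℝ f x (Pi.single i 1) :=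
  (hf.hasFDerivAt.hasDerivAt_comp_update i).deriv

theorem contDiff_pd {m N : WithTop ℕ∞} (hf : ContDiff ℝ N f) (hmN : m + 1 ≤ N) :
    ContDiff ℝ m (pd i f) := by
  have hd : pd i f = fun x => fderiv ℝ f x (Pi.single i 1) :=
    funext fun x =>
      pd_eq_fderiv (((hf.of_le (le_trans le_add_self hmN)).differentiable one_ne_zero) x)
  rw [hd]
  exact (hf.fderiv_right hmN).clm_apply contDiff_const

theorem pd_sum {ι : Type*} {s : Finset ι} {f : ι → (Fin n → ℝ) → ℝ}
    (hf : ∀ k ∈ s, DifferentiableAt ℝ (f k) x) :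
    pd i (fun z => ∑ k ∈ s, f k z) x = ∑ k ∈ s, pd i (f k) x :=
  (HasDerivAt.fun_sum fun k hk => hasDerivAt_pd (hf k hk)).deriv

theorem pd_mul (hf : DifferentiableAt ℝ f x) (hg : DifferentiableAt ℝ g x) :
    pd i (fun z => f z * g z) x = pd i f x * g x + f x * pd i g x := by
  have hmul := ((hasDerivAt_pd hf).fun_mul (hasDerivAt_pd (i := i) hg)).deriv
  rwa [update_eq_self] at hmul

theorem pd_comp {q : ℝ → ℝ} (hq : DifferentiableAt ℝ q (f x)) (hf : DifferentiableAt ℝ f x) :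
    pd i (fun z => q (f z)) x = deriv q (f x) * pd i f x :=
  (hq.hasDerivAt.comp_of_eq (x i) (hasDerivAt_pd hf) (by rw [update_eq_self])).deriv

theorem pd_eq_deriv_of_eq_sum {Φ : (Fin n → ℝ) → ℝ} {φ : Fin n → ℝ → ℝ}
    (hΦ : ∀ z, Φ z = ∑ m, φ m (z m)) (x : Fin n → ℝ) (i : Fin n) :
    pd i Φ x = deriv (φ i) (x i) := by
  have hline : ∀ t, Φ (update x i t) = φ i t + ∑ m ∈ Finset.univ \ {i}, φ m (x m) := fun t => by
    simp only [hΦ, apply_update (fun m => φ m), Finset.sum_update_of_mem (Finset.mem_univ i)]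
  simp only [pd, hline, deriv_add_const]

theorem pd_pd_eq_zero_of_eq_sum {Φ : (Fin n → ℝ) → ℝ} {φ : Fin n → ℝ → ℝ}
    (hΦ : ∀ z, Φ z = ∑ m, φ m (z m)) {i j : Fin n} (hij : i ≠ j) (x : Fin n → ℝ) :
    pd j (pd i Φ) x = 0 := by
  have hΦi : pd i Φ = fun w => deriv (φ i) (w i) := funext fun w => pd_eq_deriv_of_eq_sum hΦ w i
  rw [hΦi]
  simp only [pd, update_of_ne hij, deriv_const]

theorem pd_pd_sum_comp {q : Fin n → ℝ → ℝ} (hq : ∀ k, ContDiff ℝ 2 (q k))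
    {h : (Fin n → ℝ) → Fin n → ℝ} (hh : ContDiff ℝ 2 h) (i j : Fin n) (y : Fin n → ℝ) :
    pd j (pd i fun z => ∑ k, q k (h z k)) y =
      ∑ k, (deriv (deriv (q k)) (h y k) * jac h y k i * jac h y k j
        + deriv (q k) (h y k) * pd j (fun z => jac h z k i) y) := by
  have hhk : ∀ k, ContDiff ℝ 2 fun z => h z k := fun k => contDiff_pi.mp hh k
  have hq' : ∀ k, Differentiable ℝ (deriv (q k)) := fun k =>
    (hq k).deriv'.differentiable one_ne_zero
  have hjac : ∀ k, Differentiable ℝ fun z => jac h z k i := fun k =>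
    (contDiff_pd (m := 1) (hhk k) le_rfl).differentiable one_ne_zero
  have hqh : ∀ k z, DifferentiableAt ℝ (fun z => q k (h z k)) z := fun k z =>
    ((hq k).differentiable two_ne_zero _).comp z ((hhk k).differentiable two_ne_zero z)
  have hq'h : ∀ k z, DifferentiableAt ℝ (fun z => deriv (q k) (h z k)) z := fun k z =>
    (hq' k _).comp z ((hhk k).differentiable two_ne_zero z)
  have hfirst : (pd i fun z => ∑ k, q k (h z k)) =
      fun z => ∑ k, deriv (q k) (h z k) * jac h z k i := by
    funext z
    rw [pd_sum fun k _ => hqh k z]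
    exact Finset.sum_congr rfl fun k _ =>
      pd_comp ((hq k).differentiable two_ne_zero _) ((hhk k).differentiable two_ne_zero z)
  rw [hfirst, pd_sum fun k _ => (hq'h k y).fun_mul (hjac k y)]
  refine Finset.sum_congr rfl fun k _ => ?_
  rw [pd_mul (hq'h k y) (hjac k y), pd_comp (hq' k _) ((hhk k).differentiable two_ne_zero y)]
  simp only [jac, Matrix.of_apply]
  ring

end PartialDerivative

section LogPartialSnd

variable {n : ℕ}

/-- `∂ log P(s, x) / ∂x_l` as a function of `s`; `vvec p k y x l` and `vrvec p k y x l` are by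
definition its first and second derivatives at `s = y k` for `P = p k`. -/
noncomputable def logPartialSnd (P : ℝ × (Fin n → ℝ) → ℝ) (x : Fin n → ℝ) (l : Fin n) (s : ℝ) :
    ℝ :=
  deriv (fun t => Real.log (P (s, update x l t))) (x l)

theorem hasDerivAt_logPartialSnd {P : ℝ × (Fin n → ℝ) → ℝ} {s : ℝ} {x : Fin n → ℝ}
    (hP : DifferentiableAt ℝ P (s, x)) (hP0 : P (s, x) ≠ 0) (l : Fin n) :
    HasDerivAt (fun t => Real.log (P (s, update x l t))) (logPartialSnd P x l s) (x l) :=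
  ((hP.log hP0).hasFDerivAt.hasDerivAt_comp_prodMk_update l).differentiableAt.hasDerivAt

theorem contDiff_logPartialSnd {P : ℝ × (Fin n → ℝ) → ℝ} {m N : WithTop ℕ∞}
    (hP : ContDiff ℝ N P) (hP0 : ∀ z, P z ≠ 0) (hmN : m + 1 ≤ N) (x : Fin n → ℝ) (l : Fin n) :
    ContDiff ℝ m (logPartialSnd P x l) := by
  have hlog : ContDiff ℝ N fun z => Real.log (P z) := hP.log hP0
  have hd : logPartialSnd P x l =
      fun s => fderiv ℝ (fun z => Real.log (P z)) (s, x) (0, Pi.single l 1) :=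
    funext fun s => ((((hlog.of_le (le_trans le_add_self hmN)).differentiable one_ne_zero)
      (s, x)).hasFDerivAt.hasDerivAt_comp_prodMk_update l).deriv
  rw [hd]
  exact ((hlog.fderiv_right hmN).comp (contDiff_id.prodMk contDiff_const)).clm_apply
    contDiff_const

theorem sum_logPartialSnd_eq_of_prod_eq_mul {ι κ : Type*} [Fintype ι] [Fintype κ]
    {P : ι → ℝ × (Fin n → ℝ) → ℝ} {Q : κ → ℝ × (Fin n → ℝ) → ℝ} {s : ι → ℝ} {r : κ → ℝ}
    {c : ℝ} {x : Fin n → ℝ} (hP : ∀ i, DifferentiableAt ℝ (P i) (s i, x))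
    (hQ : ∀ k, DifferentiableAt ℝ (Q k) (r k, x)) (hP0 : ∀ i u, P i (s i, u) ≠ 0)
    (hQ0 : ∀ k u, Q k (r k, u) ≠ 0) (hc : c ≠ 0)
    (hPQ : ∀ u, ∏ i, P i (s i, u) = (∏ k, Q k (r k, u)) * c) (l : Fin n) :
    ∑ i, logPartialSnd (P i) x l (s i) = ∑ k, logPartialSnd (Q k) x l (r k) := by
  have hlog : ∀ u, ∑ i, Real.log (P i (s i, u)) = ∑ k, Real.log (Q k (r k, u)) + Real.log c :=
    fun u => by
      rw [← Real.log_prod fun i _ => hP0 i u, ← Real.log_prod fun k _ => hQ0 k u,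
        ← Real.log_mul (Finset.prod_ne_zero_iff.mpr fun k _ => hQ0 k u) hc, hPQ]
  have hPd := HasDerivAt.fun_sum fun i (_ : i ∈ Finset.univ) =>
    hasDerivAt_logPartialSnd (hP i) (hP0 i x) l
  have hQd := (HasDerivAt.fun_sum fun k (_ : k ∈ Finset.univ) =>
    hasDerivAt_logPartialSnd (hQ k) (hQ0 k x) l).add_const (Real.log c)
  simp only [hlog] at hPd
  exact hPd.unique hQd

end LogPartialSnd

theorem stmt7_general {n : ℕ}
    (p : Fin n → ℝ × (Fin n → ℝ) → ℝ)
    (hppos : ∀ (k : Fin n) (s : ℝ) (x : Fin n → ℝ), 0 < p k (s, x))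
    (hpsmooth : ∀ k, ContDiff ℝ 3 (p k))
    (phat : Fin n → ℝ × (Fin n → ℝ) → ℝ)
    (hphatpos : ∀ (i : Fin n) (s : ℝ) (x : Fin n → ℝ), 0 < phat i (s, x))
    (hphatsmooth : ∀ i, ContDiff ℝ 3 (phat i))
    (h : (Fin n → ℝ) → (Fin n → ℝ)) (hsmooth : ContDiff ℝ 3 h)
    (hJ : ∀ yh : Fin n → ℝ, IsUnit (jac h yh).det)
    (hchg : ∀ yh x : Fin n → ℝ,
      (∏ i, phat i (yh i, x)) = (∏ k, p k (h yh k, x)) * |(jac h yh).det|) :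
    ∀ (i j : Fin n), i ≠ j → ∀ (l : Fin n) (yh x : Fin n → ℝ),
      ∑ k, (vrvec p k (h yh) x l * jac h yh k i * jac h yh k j
          + vvec p k (h yh) x l * pd j (fun z => jac h z k i) yh) = 0 := by
  intro i j hij l yh x
  have hseparable : ∀ z, ∑ k, logPartialSnd (p k) x l (h z k) =
      ∑ m, logPartialSnd (phat m) x l (z m) := fun z =>
    (sum_logPartialSnd_eq_of_prod_eq_mul
      (fun m => (hphatsmooth m).differentiable (by norm_num) _)
      (fun k => (hpsmooth k).differentiable (by norm_num) _)
      (fun m u => (hphatpos m _ u).ne') (fun k u => (hppos k _ u).ne')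
      (abs_ne_zero.mpr (hJ z).ne_zero) (hchg z) l).symm
  have hq : ∀ k, ContDiff ℝ 2 (logPartialSnd (p k) x l) := fun k =>
    contDiff_logPartialSnd (hpsmooth k) (fun z => (hppos k z.1 z.2).ne') (by norm_num) x l
  calc _ = pd j (pd i fun z => ∑ k, logPartialSnd (p k) x l (h z k)) yh :=
        (pd_pd_sum_comp hq (hsmooth.of_le (by norm_num)) i j yh).symm
    _ = 0 := pd_pd_eq_zero_of_eq_sum hseparable hij yh

/-- Equation (eq:lind-ap): when the estimated conditional density factorizes and is related to
the factorized true conditional density by the change-of-variables formula through `h`, the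
linear combination of third- and second-order mixed log-density derivatives with coefficients
`Hₖᵢ Hₖⱼ` and `∂Hₖᵢ/∂ŷⱼ` vanishes identically for `i ≠ j`. -/
theorem stmt7 {n : ℕ} (hn : 1 ≤ n)
    (p : Fin n → ℝ × (Fin n → ℝ) → ℝ)
    (hppos : ∀ (k : Fin n) (s : ℝ) (x : Fin n → ℝ), 0 < p k (s, x))
    (hpsmooth : ∀ k, ContDiff ℝ 3 (p k))
    (phat : Fin n → ℝ × (Fin n → ℝ) → ℝ)
    (hphatpos : ∀ (i : Fin n) (s : ℝ) (x : Fin n → ℝ), 0 < phat i (s, x))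
    (hphatsmooth : ∀ i, ContDiff ℝ 3 (phat i))
    (h : (Fin n → ℝ) → (Fin n → ℝ)) (hsmooth : ContDiff ℝ 3 h)
    (hJ : ∀ yh : Fin n → ℝ, IsUnit (jac h yh).det)
    (hchg : ∀ yh x : Fin n → ℝ,
      (∏ i, phat i (yh i, x)) = (∏ k, p k (h yh k, x)) * |(jac h yh).det|) :
    ∀ (i j : Fin n), i ≠ j → ∀ (l : Fin n) (yh x : Fin n → ℝ),
      ∑ k, (vrvec p k (h yh) x l * jac h yh k i * jac h yh k j
          + vvec p k (h yh) x l * pd j (fun z => jac h z k i) yh) = 0 :=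
  stmt7_general p hppos hpsmooth phat hphatpos hphatsmooth h hsmooth hJ hchg
end

section
/- Let n ≥ 1 and m ≥ n, and fix an injective map ι : {1,…,n} → {1,…,m} selecting n coordinates of the conditioning variable. For k = 1,…,n let p_k : ℝ × ℝᵐ → (0,∞) be three-times continuously differentiable conditional marginal densities, for i = 1,…,n let p̂_i : ℝ × ℝᵐ → (0,∞) be functions, and let h : ℝⁿ → ℝⁿ be a twice continuously differentiable bijection with twice continuously differentiable inverse whose Jacobian H(ŷ) is invertible at every ŷ, such that for all ŷ ∈ ℝⁿ and x ∈ ℝᵐ: ∏_{i=1}^n p̂_i(ŷ_i, x) = (∏_{k=1}^n p_k(h(ŷ)_k, x)) · |det H(ŷ)|. For each k define v_k(y,x) ∈ ℝⁿ with l-th entry ∂² log p_k(y_k, x) / ∂y_k ∂x_{ι(l)} and v̊_k(y,x) ∈ ℝⁿ with l-th entry ∂³ log p_k(y_k, x) / ∂y_k² ∂x_{ι(l)}. If for every fixed y ∈ ℝⁿ the 2n functions x ↦ v_k(y,x), x ↦ v̊_k(y,x) (k = 1,…,n) are linearly independent in the vector space of functions from ℝᵐ to ℝⁿ, then there exist a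 permutation σ of {1,…,n} and functions h_1,…,h_n : ℝ → ℝ such that h(ŷ)_k = h_k(ŷ_{σ(k)}) for all ŷ and k. -/
/-- `vvecSel ι p k y x` has `l`-th entry `∂² log p_k(y_k, x) / ∂y_k ∂x_{ι l}`. -/
noncomputable def vvecSel {n m : ℕ} (ι : Fin n → Fin m)
    (p : Fin n → ℝ × (Fin m → ℝ) → ℝ) (k : Fin n)
    (y : Fin n → ℝ) (x : Fin m → ℝ) : Fin n → ℝ := fun l =>
  deriv (fun s => deriv (fun t => Real.log (p k (s, Function.update x (ι l) t))) (x (ι l))) (y k)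

/-- `vrvecSel ι p k y x` has `l`-th entry `∂³ log p_k(y_k, x) / ∂y_k² ∂x_{ι l}`. -/
noncomputable def vrvecSel {n m : ℕ} (ι : Fin n → Fin m)
    (p : Fin n → ℝ × (Fin m → ℝ) → ℝ) (k : Fin n)
    (y : Fin n → ℝ) (x : Fin m → ℝ) : Fin n → ℝ := fun l =>
  deriv (deriv (fun s =>
    deriv (fun t => Real.log (p k (s, Function.update x (ι l) t))) (x (ι l)))) (y k)

open Function

section DirDeriv

variable {E F : Type*} [NormedAddCommGroup E] [NormedSpace ℝ E]
  [NormedAddCommGroup F] [NormedSpace ℝ F]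

/-- On `ℝ × ℝᵐ`, `dirDeriv (1, 0)` is the paper's `∂/∂y_k` and `dirDeriv (0, Pi.single q 1)` is
`∂/∂x_q`; on `ℝⁿ`, `dirDeriv (Pi.single i 1) (fun z => h z k)` is the Jacobian entry `∂hₖ/∂ŷᵢ`. -/
noncomputable def dirDeriv (v : E) (f : E → ℝ) : E → ℝ := fun z => fderiv ℝ f z v

variable {f : E → ℝ}

theorem ContDiff.contDiff_dirDeriv {n m : WithTop ℕ∞} (hf : ContDiff ℝ n f) (hmn : m + 1 ≤ n)
    (v : E) : ContDiff ℝ m (dirDeriv v f) :=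
  (hf.fderiv_right hmn).clm_apply contDiff_const

theorem ContDiff.differentiable_dirDeriv (hf : ContDiff ℝ 2 f) (v : E) :
    Differentiable ℝ (dirDeriv v f) :=
  (hf.contDiff_dirDeriv (m := 1) le_rfl v).differentiable one_ne_zero

theorem dirDeriv_comm (hf : ContDiff ℝ 2 f) (u v : E) :
    dirDeriv u (dirDeriv v f) = dirDeriv v (dirDeriv u f) := by
  funext z
  have hd : DifferentiableAt ℝ (fderiv ℝ f) z :=
    (hf.fderiv_right (m := 1) le_rfl).differentiable one_ne_zero z
  change fderiv ℝ (fun y => fderiv ℝ f y v) z u = fderiv ℝ (fun y => fderiv ℝ f y u) z v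
  simp only [fderiv_clm_apply hd (differentiableAt_const _), fderiv_const_apply,
    ContinuousLinearMap.comp_zero, zero_add, ContinuousLinearMap.flip_apply]
  exact hf.contDiffAt.isSymmSndFDerivAt (by simp) u v

theorem dirDeriv_sum {κ : Type*} {t : Finset κ} {A : κ → E → ℝ} {z : E}
    (hA : ∀ k ∈ t, DifferentiableAt ℝ (A k) z) (v : E) :
    dirDeriv v (fun z => ∑ k ∈ t, A k z) z = ∑ k ∈ t, dirDeriv v (A k) z := by
  simp only [dirDeriv, fderiv_fun_sum hA, sum_apply]

theorem dirDeriv_dirDeriv_sum {κ : Type*} (t : Finset κ) {A : κ → E → ℝ}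
    (hA : ∀ k, ContDiff ℝ 2 (A k)) (u v z : E) :
    dirDeriv u (dirDeriv v fun z => ∑ k ∈ t, A k z) z
      = ∑ k ∈ t, dirDeriv u (dirDeriv v (A k)) z := by
  have hdiff : ∀ k, Differentiable ℝ (A k) := fun k => (hA k).differentiable two_ne_zero
  have hinner : dirDeriv v (fun z => ∑ k ∈ t, A k z) = fun z => ∑ k ∈ t, dirDeriv v (A k) z :=
    funext fun z => dirDeriv_sum (fun k _ => hdiff k z) v
  rw [hinner]
  exact dirDeriv_sum (fun k _ => (hA k).differentiable_dirDeriv v z) u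

theorem dirDeriv_mul {g : E → ℝ} {z : E} (hf : DifferentiableAt ℝ f z)
    (hg : DifferentiableAt ℝ g z) (v : E) :
    dirDeriv v (fun z => f z * g z) z = dirDeriv v f z * g z + f z * dirDeriv v g z := by
  simp only [dirDeriv, fderiv_fun_mul hf hg, add_apply, smul_apply, smul_eq_mul]
  ring

theorem dirDeriv_comp {φ : F → ℝ} {z : F} {g' : ℝ} {g : ℝ → ℝ} (hg : HasDerivAt g g' (φ z))
    (hφ : DifferentiableAt ℝ φ z) (v : F) :
    dirDeriv v (fun z => g (φ z)) z = g' * dirDeriv v φ z := by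
  rw [dirDeriv, show (fun z => g (φ z)) = g ∘ φ from rfl,
    (hg.comp_hasFDerivAt z hφ.hasFDerivAt).fderiv]
  rfl

theorem dirDeriv_dirDeriv_comp {φ : F → ℝ} {g g' g'' : ℝ → ℝ}
    (hg : ∀ s, HasDerivAt g (g' s) s) (hg' : ∀ s, HasDerivAt g' (g'' s) s) (hφ : ContDiff ℝ 2 φ)
    (u v z : F) :
    dirDeriv u (dirDeriv v fun z => g (φ z)) z
      = g'' (φ z) * dirDeriv u φ z * dirDeriv v φ z + g' (φ z) * dirDeriv u (dirDeriv v φ) z := by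
  have hφd : Differentiable ℝ φ := hφ.differentiable two_ne_zero
  have hinner : dirDeriv v (fun z => g (φ z)) = fun z => g' (φ z) * dirDeriv v φ z :=
    funext fun z => dirDeriv_comp (hg _) (hφd z) v
  rw [hinner, dirDeriv_mul (f := fun z => g' (φ z)) ((hg' _).differentiableAt.comp z (hφd z))
    (hφ.differentiable_dirDeriv v z), dirDeriv_comp (hg' _) (hφd z)]

end DirDeriv

section Coordinates

variable {ι : Type*} [Fintype ι] [DecidableEq ι] {f : (ι → ℝ) → ℝ}

theorem hasDerivAt_update_dirDeriv {x : ι → ℝ} {i : ι} {t : ℝ}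
    (hf : DifferentiableAt ℝ f (update x i t)) :
    HasDerivAt (fun t => f (update x i t)) (dirDeriv (Pi.single i 1) f (update x i t)) t :=
  hf.hasFDerivAt.comp_hasDerivAt t (hasDerivAt_update x i t)

theorem dirDeriv_single_eq_deriv_update {x : ι → ℝ} (hf : DifferentiableAt ℝ f x) (i : ι) :
    dirDeriv (Pi.single i 1) f x = deriv (fun t => f (update x i t)) (x i) := by
  have hline := hasDerivAt_update_dirDeriv (i := i) (t := x i) (by rwa [update_eq_self])
  rw [update_eq_self] at hline
  exact hline.deriv.symm

theorem pd_eq_dirDeriv {k : ℕ} {f : (Fin k → ℝ) → ℝ} {x : Fin k → ℝ}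
    (hf : DifferentiableAt ℝ f x) (i : Fin k) : pd i f x = dirDeriv (Pi.single i 1) f x :=
  (dirDeriv_single_eq_deriv_update hf i).symm

theorem dirDeriv_single_of_separable {g : ι → ℝ → ℝ} (hF : ∀ z, f z = ∑ i, g i (z i))
    {z : ι → ℝ} (hf : DifferentiableAt ℝ f z) (j : ι) :
    dirDeriv (Pi.single j 1) f z = deriv (g j) (z j) := by
  have hline : (fun t => f (update z j t))
      = fun t => g j t + ∑ i ∈ Finset.univ.erase j, g i (z i) := by
    funext t
    rw [hF, ← Finset.add_sum_erase _ _ (Finset.mem_univ j), update_self]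
    congr 1
    exact Finset.sum_congr rfl fun i hi => by rw [update_of_ne (Finset.ne_of_mem_erase hi)]
  rw [dirDeriv_single_eq_deriv_update hf, hline, deriv_add_const]

theorem dirDeriv_dirDeriv_of_separable {g : ι → ℝ → ℝ} (hF : ∀ z, f z = ∑ i, g i (z i))
    (hf : ContDiff ℝ 2 f) {a j : ι} (haj : a ≠ j) (z : ι → ℝ) :
    dirDeriv (Pi.single a 1) (dirDeriv (Pi.single j 1) f) z = 0 := by
  have hline : (fun t => dirDeriv (Pi.single j 1) f (update z a t))
      = fun _ => deriv (g j) (z j) := by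
    funext t
    rw [dirDeriv_single_of_separable hF (hf.differentiable two_ne_zero _), update_of_ne haj.symm]
  rw [dirDeriv_single_eq_deriv_update
    (hf.differentiable_dirDeriv _ z), hline, deriv_const]

theorem eq_apply_single_of_dirDeriv_eq_zero (hf : Differentiable ℝ f) {j : ι}
    (h0 : ∀ i ≠ j, ∀ z, dirDeriv (Pi.single i 1) f z = 0) (z : ι → ℝ) :
    f z = f (Pi.single j (z j)) := by
  set w : ι → ℝ := Pi.single j (z j)
  have hdir : ∀ y, fderiv ℝ f y (z - w) = 0 := by
    intro y
    rw [← Finset.univ_sum_single (z - w), map_sum]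
    refine Finset.sum_eq_zero fun i _ => ?_
    rcases eq_or_ne i j with rfl | hij
    · simp [w]
    · have hsmul : Pi.single i ((z - w) i) = (z - w) i • Pi.single i (1 : ℝ) := by
        rw [← Pi.single_smul, smul_eq_mul, mul_one]
      rw [hsmul, map_smul, smul_eq_mul, ← dirDeriv, h0 i hij y, mul_zero]
  have hseg : ∀ t : ℝ, HasDerivAt (fun t => f (w + t • (z - w))) 0 t := by
    intro t
    exact ((hf _).hasFDerivAt.comp_hasDerivAt t
      (((hasDerivAt_id t).smul_const (z - w)).const_add w)).congr_deriv (by simp [hdir])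
  simpa using
    is_const_of_deriv_eq_zero (fun t => (hseg t).differentiableAt) (fun t => (hseg t).deriv) 1 0

end Coordinates

section ProductCoordinates

variable {E : Type*} [NormedAddCommGroup E] [NormedSpace ℝ E] {f : ℝ × E → ℝ}

theorem hasDerivAt_comp_prodMk_left {s : ℝ} {x : E} (hf : DifferentiableAt ℝ f (s, x)) :
    HasDerivAt (fun s => f (s, x)) (dirDeriv (1, 0) f (s, x)) s :=
  hf.hasFDerivAt.comp_hasDerivAt s ((hasDerivAt_id s).prodMk (hasDerivAt_const s x))

theorem sum_mul_dirDeriv_eq_zero_of_forall_eq {κ : Type*} [Fintype κ] {A : κ → ℝ × E → ℝ}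
    (hA : ∀ i, Differentiable ℝ (A i)) (c s : κ → ℝ)
    (hconst : ∀ x x₀, ∑ i, c i * A i (s i, x) = ∑ i, c i * A i (s i, x₀)) (v x : E) :
    ∑ i, c i * dirDeriv (0, v) (A i) (s i, x) = 0 := by
  have hline : ∀ i, HasDerivAt (fun t : ℝ => A i (s i, x + t • v))
      (dirDeriv (0, v) (A i) (s i, x)) 0 := by
    intro i
    have hγ : HasDerivAt (fun t : ℝ => (s i, x + t • v)) ((0 : ℝ), v) 0 :=
      (hasDerivAt_const _ _).prodMk
        (by simpa using ((hasDerivAt_id (0 : ℝ)).smul_const v).const_add x)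
    exact (hA i _).hasFDerivAt.comp_hasDerivAt_of_eq 0 hγ (by simp)
  have hsum := HasDerivAt.fun_sum fun i (_ : i ∈ Finset.univ) => (hline i).const_mul (c i)
  rw [funext fun t => hconst (x + t • v) x] at hsum
  exact hsum.unique (hasDerivAt_const 0 _)

end ProductCoordinates

section MixedPartials

variable {ι : Type*} [Fintype ι] [DecidableEq ι] {f : ℝ × (ι → ℝ) → ℝ}

theorem deriv_update_eq_dirDeriv (hf : Differentiable ℝ f) (x : ι → ℝ) (q : ι) :
    (fun s => deriv (fun t => f (s, update x q t)) (x q))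
      = fun s => dirDeriv (0, Pi.single q 1) f (s, x) := by
  funext s
  have hline := (hf _).hasFDerivAt.comp_hasDerivAt (x q)
    ((hasDerivAt_const (x q) s).prodMk (hasDerivAt_update x q (x q)))
  rw [update_eq_self] at hline
  exact hline.deriv

theorem deriv_deriv_update_eq_dirDeriv (hf : ContDiff ℝ 2 f) (x : ι → ℝ) (q : ι) (s₀ : ℝ) :
    deriv (fun s => deriv (fun t => f (s, update x q t)) (x q)) s₀
      = dirDeriv (0, Pi.single q 1) (dirDeriv (1, 0) f) (s₀, x) := by
  rw [deriv_update_eq_dirDeriv (hf.differentiable two_ne_zero),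
    (hasDerivAt_comp_prodMk_left (hf.differentiable_dirDeriv _ _)).deriv,
    dirDeriv_comm hf]

theorem deriv_deriv_deriv_update_eq_dirDeriv (hf : ContDiff ℝ 3 f) (x : ι → ℝ) (q : ι) (s₀ : ℝ) :
    deriv (deriv fun s => deriv (fun t => f (s, update x q t)) (x q)) s₀
      = dirDeriv (0, Pi.single q 1) (dirDeriv (1, 0) (dirDeriv (1, 0) f)) (s₀, x) := by
  set e : ℝ × (ι → ℝ) := (0, Pi.single q 1)
  have hf2 : ContDiff ℝ 2 f := hf.of_le (by norm_num)
  have hDe : ContDiff ℝ 2 (dirDeriv e f) := hf.contDiff_dirDeriv (by norm_num) e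
  have hD1 : ContDiff ℝ 2 (dirDeriv (1, 0) f) := hf.contDiff_dirDeriv (by norm_num) _
  have hfirst : deriv (fun s => dirDeriv e f (s, x))
      = fun s => dirDeriv (1, 0) (dirDeriv e f) (s, x) :=
    funext fun s => (hasDerivAt_comp_prodMk_left (hDe.differentiable two_ne_zero _)).deriv
  rw [deriv_update_eq_dirDeriv (hf2.differentiable two_ne_zero), hfirst,
    (hasDerivAt_comp_prodMk_left (hDe.differentiable_dirDeriv _ _)).deriv,
    dirDeriv_comm hf2 (1, 0) e, dirDeriv_comm hD1 (1, 0) e]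

end MixedPartials

theorem sum_dirDeriv_mul_eq_zero_of_separable {ι E : Type*} [Fintype ι] [DecidableEq ι]
    [NormedAddCommGroup E] [NormedSpace ℝ E] {ℓ : ι → ℝ × E → ℝ} (hℓ : ∀ k, ContDiff ℝ 2 (ℓ k))
    {h : (ι → ℝ) → ι → ℝ} (hh : ContDiff ℝ 2 h) {x x₀ : E} {g : ι → ℝ → ℝ}
    (hsep : ∀ z, ∑ k, (ℓ k (h z k, x) - ℓ k (h z k, x₀)) = ∑ i, g i (z i))
    {a j : ι} (haj : a ≠ j) (z : ι → ℝ) :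
    ∑ k, ((dirDeriv (1, 0) (dirDeriv (1, 0) (ℓ k)) (h z k, x)
          - dirDeriv (1, 0) (dirDeriv (1, 0) (ℓ k)) (h z k, x₀))
        * dirDeriv (Pi.single a 1) (fun z => h z k) z * dirDeriv (Pi.single j 1) (fun z => h z k) z
      + (dirDeriv (1, 0) (ℓ k) (h z k, x) - dirDeriv (1, 0) (ℓ k) (h z k, x₀))
        * dirDeriv (Pi.single a 1) (dirDeriv (Pi.single j 1) fun z => h z k) z) = 0 := by
  have hφ : ∀ k, ContDiff ℝ 2 fun z => h z k := fun k => contDiff_pi.mp hh k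
  have hterm : ∀ k, ContDiff ℝ 2 fun z => ℓ k (h z k, x) - ℓ k (h z k, x₀) := fun k =>
    ((hℓ k).comp ((hφ k).prodMk contDiff_const)).sub ((hℓ k).comp ((hφ k).prodMk contDiff_const))
  rw [← dirDeriv_dirDeriv_of_separable hsep (ContDiff.sum fun k _ => hterm k) haj z,
    dirDeriv_dirDeriv_sum _ hterm]
  refine Finset.sum_congr rfl fun k _ => (dirDeriv_dirDeriv_comp
    (g := fun s => ℓ k (s, x) - ℓ k (s, x₀))
    (g' := fun s => dirDeriv (1, 0) (ℓ k) (s, x) - dirDeriv (1, 0) (ℓ k) (s, x₀))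
    (g'' := fun s => dirDeriv (1, 0) (dirDeriv (1, 0) (ℓ k)) (s, x)
      - dirDeriv (1, 0) (dirDeriv (1, 0) (ℓ k)) (s, x₀))
    (fun s => ?_) (fun s => ?_) (hφ k) _ _ z).symm
  · exact (hasDerivAt_comp_prodMk_left ((hℓ k).differentiable two_ne_zero _)).sub
      (hasDerivAt_comp_prodMk_left ((hℓ k).differentiable two_ne_zero _))
  · exact (hasDerivAt_comp_prodMk_left ((hℓ k).differentiable_dirDeriv _ _)).sub
      (hasDerivAt_comp_prodMk_left ((hℓ k).differentiable_dirDeriv _ _))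

section PermutationPattern

variable {ι R : Type*} [Fintype ι] [DecidableEq ι] [CommRing R] [NoZeroDivisors R]

theorem Matrix.exists_perm_ne_zero_iff_of_det_ne_zero {M : Matrix ι ι R} (hdet : M.det ≠ 0)
    (hrow : ∀ k a j, a ≠ j → M k a * M k j = 0) :
    ∃ σ : Equiv.Perm ι, ∀ k i, M k i ≠ 0 ↔ i = σ k := by
  have hex : ∀ k, ∃ i, M k i ≠ 0 := fun k => by
    by_contra! hk
    exact hdet (Matrix.det_eq_zero_of_row_eq_zero k hk)
  choose c hc using hex
  have hiff : ∀ k i, M k i ≠ 0 ↔ i = c k := fun k i =>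
    ⟨fun hi => by_contra fun hne => mul_ne_zero hi (hc k) (hrow k i (c k) hne), fun e => e ▸ hc k⟩
  have hsurj : Surjective c := fun i => by
    by_contra! hi
    refine hdet (Matrix.det_eq_zero_of_column_eq_zero i fun k => ?_)
    by_contra hk
    exact hi k ((hiff k i).mp hk).symm
  exact ⟨Equiv.ofBijective c ⟨Finite.injective_iff_surjective.mpr hsurj, hsurj⟩, hiff⟩

theorem exists_perm_forall_eq_zero_of_det_ne_zero {X : Type*} [TopologicalSpace X]
    [PreconnectedSpace X] [Nonempty X] [TopologicalSpace R] [T1Space R] {M : X → Matrix ι ι R}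
    (hM : ∀ k i, Continuous fun z => M z k i) (hdet : ∀ z, (M z).det ≠ 0)
    (hrow : ∀ z k a j, a ≠ j → M z k a * M z k j = 0) :
    ∃ σ : Equiv.Perm ι, ∀ z k i, i ≠ σ k → M z k i = 0 := by
  choose σ hσ using fun z => Matrix.exists_perm_ne_zero_iff_of_det_ne_zero (hdet z) (hrow z)
  have hlc : ∀ k, IsLocallyConstant fun z => σ z k := fun k => by
    refine (IsLocallyConstant.iff_eventually_eq _).mpr fun z => ?_
    have hopen : IsOpen {y | M y k (σ z k) ≠ 0} := isOpen_compl_singleton.preimage (hM k _)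
    filter_upwards [hopen.mem_nhds ((hσ z k _).mpr rfl)] with y hy
    exact ((hσ y k _).mp hy).symm
  obtain ⟨z₀⟩ := ‹Nonempty X›
  refine ⟨σ z₀, fun z k i hi => ?_⟩
  by_contra hne
  exact hi (((hσ z k i).mp hne).trans ((hlc k).apply_eq_of_preconnectedSpace z z₀))

end PermutationPattern

section LogDensities

variable {ι E : Type*} [Fintype ι]

theorem sum_log_sub_eq_of_prod_eq {p phat : ι → ℝ × E → ℝ} (hp : ∀ k s x, 0 < p k (s, x))
    (hphat : ∀ i s x, 0 < phat i (s, x)) {h : (ι → ℝ) → ι → ℝ} {d : (ι → ℝ) → ℝ}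
    (hchg : ∀ z x, ∏ i, phat i (z i, x) = (∏ k, p k (h z k, x)) * |d z|)
    (z : ι → ℝ) (x x₀ : E) :
    ∑ k, (Real.log (p k (h z k, x)) - Real.log (p k (h z k, x₀)))
      = ∑ i, (Real.log (phat i (z i, x)) - Real.log (phat i (z i, x₀))) := by
  have hlog : ∀ x, ∑ i, Real.log (phat i (z i, x))
      = ∑ k, Real.log (p k (h z k, x)) + Real.log |d z| := by
    intro x
    have hprod : 0 < ∏ i, phat i (z i, x) := Finset.prod_pos fun i _ => hphat i _ x
    have hd : d z ≠ 0 := by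
      rintro hd
      rw [hchg, hd, abs_zero, mul_zero] at hprod
      exact lt_irrefl 0 hprod
    rw [← Real.log_prod fun i _ => (hphat i _ x).ne', hchg,
      Real.log_mul (Finset.prod_ne_zero_iff.mpr fun k _ => (hp k _ x).ne') (abs_ne_zero.mpr hd),
      Real.log_prod fun k _ => (hp k _ x).ne']
  simp only [Finset.sum_sub_distrib]
  linarith [hlog x, hlog x₀]

end LogDensities

theorem dirDeriv_mul_dirDeriv_eq_zero_of_linearIndependent {n m : ℕ} (ι : Fin n → Fin m)
    {p phat : Fin n → ℝ × (Fin m → ℝ) → ℝ} (hppos : ∀ k s x, 0 < p k (s, x))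
    (hpsmooth : ∀ k, ContDiff ℝ 3 (p k)) (hphatpos : ∀ i s x, 0 < phat i (s, x))
    {h : (Fin n → ℝ) → Fin n → ℝ} (hsmooth : ContDiff ℝ 2 h) {d : (Fin n → ℝ) → ℝ}
    (hchg : ∀ z x, ∏ i, phat i (z i, x) = (∏ k, p k (h z k, x)) * |d z|)
    (hli : ∀ y, LinearIndependent ℝ
      (Sum.elim (fun k x => vvecSel ι p k y x) (fun k x => vrvecSel ι p k y x)))
    (z : Fin n → ℝ) {a j : Fin n} (haj : a ≠ j) (k : Fin n) :
    dirDeriv (Pi.single a 1) (fun z => h z k) z * dirDeriv (Pi.single j 1) (fun z => h z k) z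
      = 0 := by
  set L : Fin n → ℝ × (Fin m → ℝ) → ℝ := fun k y => Real.log (p k y)
  have hL : ∀ k, ContDiff ℝ 3 (L k) := fun k => (hpsmooth k).log fun y => (hppos k y.1 y.2).ne'
  set r : Fin n → ℝ × (Fin m → ℝ) → ℝ := fun k => dirDeriv (1, 0) (L k)
  set w : Fin n → ℝ × (Fin m → ℝ) → ℝ := fun k => dirDeriv (1, 0) (r k)
  have hr : ∀ k, ContDiff ℝ 2 (r k) := fun k => (hL k).contDiff_dirDeriv (by norm_num) _
  have hw : ∀ k, ContDiff ℝ 1 (w k) := fun k => (hr k).contDiff_dirDeriv (by norm_num) _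
  set J : Fin n → Fin n → (Fin n → ℝ) → ℝ := fun k i => dirDeriv (Pi.single i 1) (fun z => h z k)
  have hsecond : ∀ x x₀, ∑ k, ((w k (h z k, x) - w k (h z k, x₀)) * J k a z * J k j z
      + (r k (h z k, x) - r k (h z k, x₀)) * dirDeriv (Pi.single a 1) (J k j) z) = 0 :=
    fun x x₀ => sum_dirDeriv_mul_eq_zero_of_separable (fun k => (hL k).of_le (by norm_num))
      hsmooth (g := fun i t => Real.log (phat i (t, x)) - Real.log (phat i (t, x₀)))
      (sum_log_sub_eq_of_prod_eq hppos hphatpos hchg · x x₀) haj z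
  set c : Fin n ⊕ Fin n → ℝ :=
    Sum.elim (fun k => dirDeriv (Pi.single a 1) (J k j) z) (fun k => J k a z * J k j z)
  set A : Fin n ⊕ Fin n → ℝ × (Fin m → ℝ) → ℝ := Sum.elim r w
  set s : Fin n ⊕ Fin n → ℝ := Sum.elim (h z) (h z)
  have hconst : ∀ x x₀, ∑ κ, c κ * A κ (s κ, x) = ∑ κ, c κ * A κ (s κ, x₀) := by
    intro x x₀
    rw [← sub_eq_zero, ← hsecond x x₀]
    simp only [Fintype.sum_sum_type, Sum.elim_inl, Sum.elim_inr, c, A, s]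
    rw [← Finset.sum_add_distrib, ← Finset.sum_add_distrib, ← Finset.sum_sub_distrib]
    exact Finset.sum_congr rfl fun k _ => by ring
  have hA : ∀ κ, Differentiable ℝ (A κ) := by
    rintro (k | k)
    exacts [(hr k).differentiable (by norm_num), (hw k).differentiable (by norm_num)]
  refine Fintype.linearIndependent_iff.mp (hli (h z)) c ?_ (Sum.inr k)
  funext x l
  simp only [Finset.sum_apply, Pi.smul_apply, smul_eq_mul, Pi.zero_apply]
  rw [← sum_mul_dirDeriv_eq_zero_of_forall_eq hA c s hconst (Pi.single (ι l) 1) x]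
  refine Finset.sum_congr rfl fun κ _ => ?_
  rcases κ with k | k
  · exact congrArg _ (deriv_deriv_update_eq_dirDeriv ((hL k).of_le (by norm_num)) x (ι l) (h z k))
  · exact congrArg _ (deriv_deriv_deriv_update_eq_dirDeriv (hL k) x (ι l) (h z k))

theorem stmt15_general {n m : ℕ}
    (ι : Fin n → Fin m)
    (p : Fin n → ℝ × (Fin m → ℝ) → ℝ)
    (hppos : ∀ (k : Fin n) (s : ℝ) (x : Fin m → ℝ), 0 < p k (s, x))
    (hpsmooth : ∀ k, ContDiff ℝ 3 (p k))
    (phat : Fin n → ℝ × (Fin m → ℝ) → ℝ)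
    (hphatpos : ∀ (i : Fin n) (s : ℝ) (x : Fin m → ℝ), 0 < phat i (s, x))
    (h : (Fin n → ℝ) → (Fin n → ℝ))
    (hsmooth : ContDiff ℝ 2 h)
    (hJ : ∀ yh : Fin n → ℝ, IsUnit (jac h yh).det)
    (hchg : ∀ (yh : Fin n → ℝ) (x : Fin m → ℝ),
      (∏ i, phat i (yh i, x)) = (∏ k, p k (h yh k, x)) * |(jac h yh).det|)
    (hli : ∀ y : Fin n → ℝ,
      LinearIndependent ℝ
        (Sum.elim (fun k => fun x => vvecSel ι p k y x) (fun k => fun x => vrvecSel ι p k y x) :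
          Fin n ⊕ Fin n → (Fin m → ℝ) → Fin n → ℝ)) :
    ∃ (σ : Equiv.Perm (Fin n)) (hcomp : Fin n → ℝ → ℝ),
      ∀ (yh : Fin n → ℝ) (k : Fin n), h yh k = hcomp k (yh (σ k)) := by
  have hφ : ∀ k, ContDiff ℝ 2 fun z => h z k := fun k => contDiff_pi.mp hsmooth k
  have hjac : ∀ z, jac h z = Matrix.of fun k i => dirDeriv (Pi.single i 1) (fun y => h y k) z :=
    fun z => Matrix.ext fun k i => pd_eq_dirDeriv ((hφ k).differentiable two_ne_zero z) i
  obtain ⟨σ, hσ⟩ := exists_perm_forall_eq_zero_of_det_ne_zero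
    (M := fun z => Matrix.of fun k i => dirDeriv (Pi.single i 1) (fun y => h y k) z)
    (fun k i => ((hφ k).differentiable_dirDeriv _).continuous)
    (fun z => hjac z ▸ (hJ z).ne_zero)
    (fun z k a j haj => dirDeriv_mul_dirDeriv_eq_zero_of_linearIndependent ι hppos hpsmooth
      hphatpos hsmooth hchg hli z haj k)
  exact ⟨σ, fun k t => h (Pi.single (σ k) t) k, fun z k =>
    eq_apply_single_of_dirDeriv_eq_zero ((hφ k).differentiable two_ne_zero)
      (fun i hi y => hσ y k i hi) z⟩

/-- Extension of Lemma 1 to multiple lags: the conditioning variable lives in `ℝᵐ`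
(`m ≥ n`), the sufficient-variability derivatives are taken with respect to the `n`
coordinates selected by the injection `ι` (one particular lag), and the same
component-wise-permutation identifiability conclusion holds. -/
theorem stmt15 {n m : ℕ} (hn : 1 ≤ n) (hm : n ≤ m)
    (ι : Fin n → Fin m) (hι : Function.Injective ι)
    (p : Fin n → ℝ × (Fin m → ℝ) → ℝ)
    (hppos : ∀ (k : Fin n) (s : ℝ) (x : Fin m → ℝ), 0 < p k (s, x))
    (hpsmooth : ∀ k, ContDiff ℝ 3 (p k))
    (phat : Fin n → ℝ × (Fin m → ℝ) → ℝ)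
    (hphatpos : ∀ (i : Fin n) (s : ℝ) (x : Fin m → ℝ), 0 < phat i (s, x))
    (h : (Fin n → ℝ) → (Fin n → ℝ))
    (hbij : Function.Bijective h)
    (hsmooth : ContDiff ℝ 2 h)
    (hinv : ∃ g : (Fin n → ℝ) → (Fin n → ℝ),
      ContDiff ℝ 2 g ∧ Function.LeftInverse g h ∧ Function.RightInverse g h)
    (hJ : ∀ yh : Fin n → ℝ, IsUnit (jac h yh).det)
    (hchg : ∀ (yh : Fin n → ℝ) (x : Fin m → ℝ),
      (∏ i, phat i (yh i, x)) = (∏ k, p k (h yh k, x)) * |(jac h yh).det|)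
    (hli : ∀ y : Fin n → ℝ,
      LinearIndependent ℝ
        (Sum.elim (fun k => fun x => vvecSel ι p k y x) (fun k => fun x => vrvecSel ι p k y x) :
          Fin n ⊕ Fin n → (Fin m → ℝ) → Fin n → ℝ)) :
    ∃ (σ : Equiv.Perm (Fin n)) (hcomp : Fin n → ℝ → ℝ),
      ∀ (yh : Fin n → ℝ) (k : Fin n), h yh k = hcomp k (yh (σ k)) :=
  stmt15_general ι p hppos hpsmooth phat hphatpos h hsmooth hJ hchg hli
end
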